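/- arXiv:1808.02253 — 2 statements merged into one kernel-verified Lean document; each statement's English description precedes it below -/
import Mathlib

section
/- Let n be a nonempty finite type, 0 < α < 1, A an n×n real matrix, and x₀ ∈ ℝ^n. Then for every t > 0 the trajectory x(s) = E_α(s^α • A) · x₀ is differentiable at t with derivative t⁻¹ • (E_{α,0}(t^α • A) · x₀); i.e., the map s ↦ E_α(s^α • A) · x₀ HasDerivAt t⁻¹ • (E_{α,0}(t^α • A) · x₀) at t. In particular, the tangent vector of the trajectory vanishes at time t if and only if E_{α,0}(t^α • A) · x₀ = 0. -/
/-!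
Writing `E_{α,1}(zA) = ∑ z ^ k • A ^ k / Γ(αk + 1)`, the map `z ↦ E_{α,1}(zA)` is an entire power
series in `z`: the bound `R ^ (x - 2) ≤ exp R * Γ x` makes `1 / Γ(αk + β)` decay faster than any
geometric sequence. Differentiating termwise and composing with `s ↦ s ^ α`, the `k`-th term of
the derivative carries `αk / Γ(αk + 1) = 1 / Γ(αk)`, which is the `k`-th coefficient of
`E_{α,0}` (both vanish at `k = 0`).
-/

/-- The two-parameter Mittag-Leffler matrix function `E_{α,β}(A) = ∑ A^k / Γ(αk+β)`
of a real matrix, with `1/Γ` taken to be `0` at the poles of `Γ`. -/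
noncomputable def mlMatR (α β : ℝ) {n : Type*} [Fintype n] [DecidableEq n]
    (A : Matrix n n ℝ) : Matrix n n ℝ :=
  ∑' k : ℕ, (Real.Gamma (α * k + β))⁻¹ • A ^ k

open Filter Metric Real

theorem Real.rpow_sub_two_le_exp_mul_Gamma {R x : ℝ} (hR : 1 ≤ R) (hx : 2 ≤ x) :
    R ^ (x - 2) ≤ exp R * Gamma x := by
  set m := ⌊x⌋₊ - 1
  have hm : (m : ℝ) + 1 = ⌊x⌋₊ := by
    have : 1 ≤ ⌊x⌋₊ := Nat.le_floor (by push_cast; linarith)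
    simp [m, Nat.cast_sub this]
  have h2 : (2 : ℝ) ≤ m + 1 := by
    rw [hm]; exact_mod_cast Nat.le_floor (by push_cast; linarith)
  calc R ^ (x - 2) ≤ R ^ m := by
        rw [← rpow_natCast]
        exact rpow_le_rpow_of_exponent_le hR (by linarith [Nat.lt_floor_add_one x])
    _ ≤ exp R * m.factorial :=
        (div_le_iff₀ (by positivity)).1 (pow_div_factorial_le_exp R (by linarith) m)
    _ = exp R * Gamma (m + 1) := by rw [Gamma_nat_eq_factorial]
    _ ≤ exp R * Gamma x := by
        gcongr
        exact Gamma_strictMonoOn_Ici.monotoneOn h2 (by simp only [Set.mem_Ici]; linarith)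
          (by rw [hm]; exact Nat.floor_le (by linarith))

theorem Real.mul_inv_Gamma_add_one (s : ℝ) : s * (Gamma (s + 1))⁻¹ = (Gamma s)⁻¹ := by
  rcases eq_or_ne s 0 with rfl | hs
  · simp
  · rw [Gamma_add_one hs, mul_inv, ← mul_assoc, mul_inv_cancel₀ hs, one_mul]

theorem summable_norm_inv_Gamma_mul_pow {α : ℝ} (hα : 0 < α) (β r : ℝ) :
    Summable fun k : ℕ => ‖(Gamma (α * k + β))⁻¹‖ * r ^ k := by
  set R := (|r| + 1) ^ α⁻¹
  have hR : 1 ≤ R := one_le_rpow (by linarith [abs_nonneg r]) (inv_nonneg.2 hα.le)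
  have hRα : R ^ α = |r| + 1 := by
    rw [← rpow_mul (by positivity), inv_mul_cancel₀ hα.ne', rpow_one]
  have hq : |r| / (|r| + 1) < 1 := (div_lt_one (by positivity)).2 (by linarith)
  refine Summable.of_norm_bounded_eventually_nat
    ((summable_geometric_of_lt_one (by positivity) hq).mul_left (exp R * R ^ (2 - β))) ?_
  have hlarge : ∀ᶠ k : ℕ in atTop, 2 ≤ α * k + β :=
    ((tendsto_natCast_atTop_atTop.const_mul_atTop hα).atTop_add
      tendsto_const_nhds).eventually_ge_atTop 2
  filter_upwards [hlarge] with k hk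
  have hΓ := rpow_sub_two_le_exp_mul_Gamma hR hk
  have hΓpos : 0 < Gamma (α * k + β) := pos_of_mul_pos_right
    ((rpow_pos_of_pos (by linarith) _).trans_le hΓ) (exp_pos R).le
  have hsplit : R ^ (α * k + β - 2) * R ^ (2 - β) = (|r| + 1) ^ k := by
    rw [← rpow_add (by linarith), show α * k + β - 2 + (2 - β) = α * k by ring,
      rpow_mul (by linarith), hRα, rpow_natCast]
  have hP : 0 < R ^ (α * k + β - 2) := by positivity
  rw [norm_mul, norm_norm, norm_inv, norm_pow, Real.norm_of_nonneg hΓpos.le, Real.norm_eq_abs,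
    div_pow, ← hsplit]
  calc (Gamma (α * k + β))⁻¹ * |r| ^ k ≤ exp R / R ^ (α * k + β - 2) * |r| ^ k := by
        gcongr
        rw [← one_div, div_le_div_iff₀ hΓpos hP, one_mul]
        exact hΓ
    _ = exp R * R ^ (2 - β) * (|r| ^ k / (R ^ (α * k + β - 2) * R ^ (2 - β))) := by
        field_simp

theorem summable_norm_smul_pow_mul_pow {𝕜 𝔸 : Type*} [NormedField 𝕜] [NormedRing 𝔸]
    [NormedSpace 𝕜 𝔸] {c : ℕ → 𝕜} (hc : ∀ r : ℝ, Summable fun k => ‖c k‖ * r ^ k) (a : 𝔸)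
    (r : ℝ) : Summable fun k => ‖c k • a ^ k‖ * r ^ k := by
  refine Summable.of_norm_bounded_eventually_nat (hc (‖a‖ * |r|)) ?_
  filter_upwards [eventually_gt_atTop 0] with k hk
  rw [norm_mul, norm_norm, norm_pow, Real.norm_eq_abs, mul_pow, ← mul_assoc, norm_smul]
  gcongr
  exact norm_pow_le' a hk

theorem hasDerivAt_tsum_pow_smul {𝕜 E : Type*} [RCLike 𝕜] [NormedAddCommGroup E]
    [NormedSpace 𝕜 E] [CompleteSpace E] {v : ℕ → E}
    (hv : ∀ r : ℝ, Summable fun k => ‖v k‖ * r ^ k) (z : 𝕜) :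
    HasDerivAt (fun y : 𝕜 => ∑' k, y ^ k • v k) (∑' k : ℕ, ((k : 𝕜) * z ^ (k - 1)) • v k) z := by
  set R := ‖z‖ + 1
  have hR : 1 ≤ R := by simp [R]
  have hz : z ∈ ball (0 : 𝕜) R := mem_ball_zero_iff.2 (by simp [R])
  have hsum : Summable fun k => z ^ k • v k :=
    .of_norm_bounded (hv ‖z‖) fun k => by rw [norm_smul, norm_pow, mul_comm]
  refine hasDerivAt_tsum_of_isPreconnected
    (g' := fun (k : ℕ) (y : 𝕜) => ((k : 𝕜) * y ^ (k - 1)) • v k) (hv (2 * R)) isOpen_ball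
    (convex_ball 0 R).isPreconnected (fun k y _ => (hasDerivAt_pow k y).smul_const (v k))
    (fun k y hy => ?_) hz hsum hz
  replace hy : ‖y‖ ≤ R := (mem_ball_zero_iff.1 hy).le
  calc ‖((k : 𝕜) * y ^ (k - 1)) • v k‖ = k * ‖y‖ ^ (k - 1) * ‖v k‖ := by
        rw [norm_smul, norm_mul, norm_pow, RCLike.norm_natCast]
    _ ≤ 2 ^ k * R ^ k * ‖v k‖ := by
        gcongr
        · exact_mod_cast k.lt_two_pow_self.le
        · exact (pow_le_pow_left₀ (norm_nonneg y) hy _).trans (pow_le_pow_right₀ hR (k.sub_le 1))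
    _ = ‖v k‖ * (2 * R) ^ k := by rw [mul_pow, mul_comm]

attribute [local instance] Matrix.linftyOpNormedRing Matrix.linftyOpNormedAlgebra

section

variable {n : Type*} [Fintype n] [DecidableEq n]

theorem mlMatR_smul_eq_tsum (α β z : ℝ) (A : Matrix n n ℝ) :
    mlMatR α β (z • A) = ∑' k : ℕ, z ^ k • ((Gamma (α * k + β))⁻¹ • A ^ k) :=
  tsum_congr fun k => by rw [smul_pow, smul_comm]

theorem hasDerivAt_mlMatR_smul {α : ℝ} (hα : 0 < α) (β : ℝ) (A : Matrix n n ℝ) (z : ℝ) :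
    HasDerivAt (fun y => mlMatR α β (y • A))
      (∑' k : ℕ, ((k : ℝ) * z ^ (k - 1)) • ((Gamma (α * k + β))⁻¹ • A ^ k)) z := by
  simp_rw [mlMatR_smul_eq_tsum]
  exact hasDerivAt_tsum_pow_smul
    (summable_norm_smul_pow_mul_pow (summable_norm_inv_Gamma_mul_pow hα β) A) z

theorem hasDerivAt_mlMatR_rpow_smul {α : ℝ} (hα : 0 < α) (A : Matrix n n ℝ) {t : ℝ}
    (ht : 0 < t) :
    HasDerivAt (fun s => mlMatR α 1 (s ^ α • A)) (t⁻¹ • mlMatR α 0 (t ^ α • A)) t := by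
  refine ((hasDerivAt_mlMatR_smul hα 1 A (t ^ α)).scomp t
    (hasDerivAt_rpow_const (Or.inl ht.ne'))).congr_deriv ?_
  rw [mlMatR_smul_eq_tsum, ← tsum_const_smul'', ← tsum_const_smul'']
  refine tsum_congr fun k => ?_
  simp only [smul_smul]
  congr 1
  rcases k with _ | k
  · simp
  · have hΓ := mul_inv_Gamma_add_one (α * (k + 1 : ℕ))
    rw [add_zero, Nat.add_sub_cancel, rpow_sub_one ht.ne']
    push_cast at hΓ ⊢
    linear_combination t⁻¹ * (t ^ α) ^ (k + 1) * hΓ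

end

theorem trajectory_hasDerivAt_general {n : Type*} [Fintype n] [DecidableEq n]
    (α : ℝ) (hα0 : 0 < α) (A : Matrix n n ℝ) (x₀ : n → ℝ)
    (t : ℝ) (ht : 0 < t) :
    HasDerivAt (fun s : ℝ => (mlMatR α 1 ((s ^ α) • A)).mulVec x₀)
      (t⁻¹ • ((mlMatR α 0 ((t ^ α) • A)).mulVec x₀)) t ∧
    (t⁻¹ • ((mlMatR α 0 ((t ^ α) • A)).mulVec x₀) = 0 ↔
      (mlMatR α 0 ((t ^ α) • A)).mulVec x₀ = 0) := by
  let L : Matrix n n ℝ →L[ℝ] n → ℝ :=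
    ((Matrix.mulVecBilin ℝ ℝ).flip x₀).toContinuousLinearMap
  refine ⟨?_, smul_eq_zero_iff_right (inv_ne_zero ht.ne')⟩
  rw [← Matrix.smul_mulVec]
  exact L.hasFDerivAt.comp_hasDerivAt t (hasDerivAt_mlMatR_rpow_smul hα0 A ht)

theorem trajectory_hasDerivAt {n : Type*} [Fintype n] [DecidableEq n] [Nonempty n]
    (α : ℝ) (hα0 : 0 < α) (hα1 : α < 1) (A : Matrix n n ℝ) (x₀ : n → ℝ)
    (t : ℝ) (ht : 0 < t) :
    HasDerivAt (fun s : ℝ => (mlMatR α 1 ((s ^ α) • A)).mulVec x₀)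
      (t⁻¹ • ((mlMatR α 0 ((t ^ α) • A)).mulVec x₀)) t ∧
    (t⁻¹ • ((mlMatR α 0 ((t ^ α) • A)).mulVec x₀) = 0 ↔
      (mlMatR α 0 ((t ^ α) • A)).mulVec x₀ = 0) :=
  trajectory_hasDerivAt_general α hα0 A x₀ t ht
end

section
/- Let n be a nonempty finite type, 0 < α < 1, T > 0, and A an n×n real matrix with complexification A_ℂ. Then there exists a nonzero x₀ ∈ ℝ^n with E_{α,0}(T^α • A) · x₀ = 0 (i.e., a trajectory has a multiple point at time T) if and only if there exists an eigenvalue λ ∈ spectrum ℂ A_ℂ with E_{α,0}(T^α λ) = 0 (i.e., λ = η / T^α for some zero η of E_{α,0}). -/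
/-- The two-parameter Mittag-Leffler function `E_{α,β}(z) = ∑ z^k / Γ(αk+β)`,
with `1/Γ` taken to be `0` at the poles of `Γ`. -/
noncomputable def mlE (α β : ℝ) (z : ℂ) : ℂ :=
  ∑' k : ℕ, ((Real.Gamma (α * k + β) : ℂ))⁻¹ * z ^ k

/-! A convergent power series `F = ∑ aₖ Mᵏ` in a complex matrix `M` commutes with `M`, so `M`
preserves `ker F` and, `ℂ` being algebraically closed, has an eigenvector `w` in it; on an
eigenvector `M w = μ w` the series acts as the scalar `∑ aₖ μᵏ`. Hence `F` is singular exactly when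
`∑ aₖ μᵏ = 0` for some eigenvalue `μ` of `M`. A real matrix is singular iff its complexification is
(both mean `det = 0`), and `E_{α,0}(T^α • A)` complexifies to such a series in `A_ℂ` with
`aₖ = (T^α)ᵏ / Γ(αk)`.

Convergence for `α > 0`: comparing `Γ(x)` with `⌊x - 1⌋!` gives `1/Γ(x) ≤ e^q q^(2-x)` for
`q ≥ 1`, `x ≥ 2`, and choosing `q^α = 2‖b‖ + 1` bounds `‖b‖ᵏ / Γ(αk + β)` by a multiple of `2⁻ᵏ`. -/

open Real Filter

theorem Real.inv_Gamma_le_exp_mul_rpow {q x : ℝ} (hq : 1 ≤ q) (hx : 2 ≤ x) :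
    (Gamma x)⁻¹ ≤ exp q * q ^ (2 - x) := by
  set j := ⌊x - 1⌋₊
  have hj : (j : ℝ) ≤ x - 1 := Nat.floor_le (by linarith)
  have hj' : x - 1 < j + 1 := Nat.lt_floor_add_one _
  have hj1 : 1 ≤ j := Nat.le_floor (by norm_num; linarith)
  have hΓ : (j.factorial : ℝ) ≤ Gamma x := by
    rw [← Gamma_nat_eq_factorial]
    refine Gamma_strictMonoOn_Ici.monotoneOn ?_ (Set.mem_Ici.mpr hx) (by linarith)
    simp only [Set.mem_Ici]; exact_mod_cast Nat.succ_le_succ hj1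
  have hpow : q ^ (x - 2) ≤ q ^ j := by
    rw [← rpow_natCast]; exact rpow_le_rpow_of_exponent_le hq (by linarith)
  have hq0 : 0 < q := by linarith
  calc (Gamma x)⁻¹ = q ^ (x - 2) / Gamma x * q ^ (2 - x) := by
        rw [div_mul_eq_mul_div, ← rpow_add hq0]; simp
    _ ≤ q ^ j / j.factorial * q ^ (2 - x) := by gcongr
    _ ≤ exp q * q ^ (2 - x) := by gcongr; exact pow_div_factorial_le_exp q hq0.le j

theorem summable_inv_Gamma_smul_pow {R : Type*} [NormedRing R] [NormedAlgebra ℝ R]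
    [CompleteSpace R] {α : ℝ} (hα : 0 < α) (β : ℝ) (b : R) :
    Summable fun k : ℕ => (Gamma (α * k + β))⁻¹ • b ^ k := by
  set s := 2 * ‖b‖ + 1
  set q := s ^ α⁻¹
  have hs : 1 ≤ s := by simp only [s]; linarith [norm_nonneg b]
  have hq : 1 ≤ q := one_le_rpow hs (by positivity)
  have hqα : q ^ α = s := by rw [← rpow_mul (by linarith), inv_mul_cancel₀ hα.ne', rpow_one]
  have hgeom : Summable fun k : ℕ => exp q * q ^ (2 - β) * (1 / 2 : ℝ) ^ k :=
    (summable_geometric_two).mul_left _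
  refine .of_norm_bounded_eventually_nat hgeom ?_
  have hlarge : ∀ᶠ k : ℕ in atTop, 2 ≤ α * k + β :=
    (tendsto_atTop_add_const_right _ β
      (tendsto_natCast_atTop_atTop.const_mul_atTop hα)).eventually_ge_atTop 2
  filter_upwards [hlarge, eventually_ge_atTop 1] with k hk hk1
  have hΓ : 0 < Gamma (α * k + β) := Gamma_pos_of_pos (by linarith)
  calc ‖(Gamma (α * k + β))⁻¹ • b ^ k‖
      ≤ (Gamma (α * k + β))⁻¹ * ‖b‖ ^ k := by
        rw [norm_smul, Real.norm_of_nonneg (inv_nonneg.mpr hΓ.le)]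
        gcongr; exact norm_pow_le' b hk1
    _ ≤ exp q * q ^ (2 - (α * k + β)) * ‖b‖ ^ k := by
        gcongr; exact inv_Gamma_le_exp_mul_rpow hq hk
    _ = exp q * q ^ (2 - β) * (‖b‖ / s) ^ k := by
        rw [show 2 - (α * k + β) = 2 - β - α * k by ring, rpow_sub (by linarith),
          rpow_mul (by linarith), hqα, rpow_natCast, div_pow]
        ring
    _ ≤ exp q * q ^ (2 - β) * (1 / 2) ^ k := by
        have hratio : ‖b‖ / s ≤ 1 / 2 := by rw [div_le_iff₀ (by linarith)]; linarith
        gcongr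

theorem Module.End.exists_hasEigenvector_mem_ker_of_commute {K V : Type*} [Field K]
    [IsAlgClosed K] [AddCommGroup V] [Module K V] [FiniteDimensional K V] {f g : Module.End K V}
    (hfg : Commute f g) (hg : LinearMap.ker g ≠ ⊥) :
    ∃ μ x, f.HasEigenvector μ x ∧ x ∈ LinearMap.ker g := by
  have hmaps : ∀ x ∈ LinearMap.ker g, f x ∈ LinearMap.ker g := fun x hx => by
    rw [LinearMap.mem_ker] at hx ⊢
    rw [← Module.End.mul_apply, ← hfg.eq, Module.End.mul_apply, hx, map_zero]
  have : Nontrivial (LinearMap.ker g) := Submodule.nontrivial_iff_ne_bot.mpr hg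
  obtain ⟨μ, hμ⟩ := Module.End.exists_eigenvalue (f.restrict hmaps)
  obtain ⟨⟨x, hx⟩, hxμ⟩ := hμ.exists_hasEigenvector
  refine ⟨μ, x, ⟨?_, ?_⟩, hx⟩
  · exact Module.End.mem_eigenspace_iff.mpr (congrArg Subtype.val hxμ.apply_eq_smul)
  · exact fun h => hxμ.2 (Subtype.ext h)

namespace Matrix

variable {n : Type*} [Fintype n] [DecidableEq n]

theorem exists_mulVec_eq_zero_iff_map {R S : Type*} [CommRing R] [IsDomain R] [CommRing S]
    [IsDomain S] {f : R →+* S} (hf : Function.Injective f) (B : Matrix n n R) :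
    (∃ v ≠ 0, B *ᵥ v = 0) ↔ ∃ v ≠ 0, B.map f *ᵥ v = 0 := by
  rw [exists_mulVec_eq_zero_iff, exists_mulVec_eq_zero_iff, ← RingHom.mapMatrix_apply,
    ← RingHom.map_det, map_eq_zero_iff f hf]

variable {K : Type*} [Field K]

theorem mem_spectrum_iff_exists_mulVec_eq_smul {M : Matrix n n K} {μ : K} :
    μ ∈ spectrum K M ↔ ∃ v ≠ 0, M *ᵥ v = μ • v := by
  rw [← spectrum_toLin', ← Module.End.hasEigenvalue_iff_mem_spectrum,
    Module.End.hasEigenvalue_iff, Submodule.ne_bot_iff]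
  simp only [Module.End.mem_eigenspace_iff, toLin'_apply]
  grind

variable [TopologicalSpace K] [IsTopologicalRing K] [T2Space K]

theorem tsum_smul_pow_mulVec_of_mulVec_eq_smul {a : ℕ → K} {M : Matrix n n K}
    (hM : Summable fun k => a k • M ^ k) {μ : K} (hμ : Summable fun k => a k * μ ^ k)
    {v : n → K} (hv : M *ᵥ v = μ • v) :
    (∑' k, a k • M ^ k) *ᵥ v = (∑' k, a k * μ ^ k) • v := by
  have hpow : ∀ k, M ^ k *ᵥ v = μ ^ k • v := by
    intro k
    induction k with
    | zero => simp
    | succ k ih => rw [pow_succ', ← mulVec_mulVec, ih, mulVec_smul, hv, smul_smul, pow_succ]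
  refine (hM.map_tsum (mulVec.addMonoidHomLeft v)
    (continuous_id.matrix_mulVec continuous_const)).trans ?_
  rw [← hμ.tsum_smul_const]
  refine tsum_congr fun k => ?_
  simp [mulVec.addMonoidHomLeft, smul_mulVec, hpow, smul_smul]

theorem exists_tsum_smul_pow_mulVec_eq_zero_iff [IsAlgClosed K] {a : ℕ → K} {M : Matrix n n K}
    (hM : Summable fun k => a k • M ^ k) (ha : ∀ μ, Summable fun k => a k * μ ^ k) :
    (∃ v ≠ 0, (∑' k, a k • M ^ k) *ᵥ v = 0) ↔ ∃ μ ∈ spectrum K M, ∑' k, a k * μ ^ k = 0 := by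
  constructor
  · rintro ⟨v, hv0, hv⟩
    have hcomm : Commute M (∑' k, a k • M ^ k) :=
      Commute.tsum_right M fun k => ((Commute.refl M).pow_right k).smul_right (a k)
    have hker : LinearMap.ker (toLin' (∑' k, a k • M ^ k)) ≠ ⊥ :=
      (Submodule.ne_bot_iff _).mpr ⟨v, by rwa [LinearMap.mem_ker, toLin'_apply], hv0⟩
    obtain ⟨μ, w, hw, hwker⟩ := Module.End.exists_hasEigenvector_mem_ker_of_commute
      (hcomm.map toLinAlgEquiv') hker
    have hMw : M *ᵥ w = μ • w := by simpa using hw.apply_eq_smul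
    refine ⟨μ, mem_spectrum_iff_exists_mulVec_eq_smul.mpr ⟨w, hw.2, hMw⟩, ?_⟩
    have hFw := tsum_smul_pow_mulVec_of_mulVec_eq_smul hM (ha μ) hMw
    rw [LinearMap.mem_ker, toLinAlgEquiv'_apply] at hwker
    rw [hwker, eq_comm, smul_eq_zero] at hFw
    exact hFw.resolve_right hw.2
  · rintro ⟨μ, hμ, hzero⟩
    obtain ⟨v, hv0, hv⟩ := mem_spectrum_iff_exists_mulVec_eq_smul.mp hμ
    exact ⟨v, hv0, by rw [tsum_smul_pow_mulVec_of_mulVec_eq_smul hM (ha μ) hv, hzero, zero_smul]⟩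

end Matrix

section

attribute [local instance] Matrix.linftyOpNormedRing Matrix.linftyOpNormedAlgebra

theorem Matrix.summable_inv_Gamma_smul_pow {n : Type*} [Fintype n] [DecidableEq n] {α : ℝ}
    (hα : 0 < α) (β : ℝ) (B : Matrix n n ℝ) :
    Summable fun k : ℕ => (Real.Gamma (α * k + β))⁻¹ • B ^ k :=
  _root_.summable_inv_Gamma_smul_pow hα β B

end

open Complex Matrix in
theorem multiple_point_iff_general {n : Type*} [Fintype n] [DecidableEq n]
    (α : ℝ) (hα0 : 0 < α) (T : ℝ) (A : Matrix n n ℝ) :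
    (∃ x₀ : n → ℝ, x₀ ≠ 0 ∧ (mlMatR α 0 ((T ^ α) • A)).mulVec x₀ = 0) ↔
      ∃ lam ∈ spectrum ℂ (A.map Complex.ofReal),
        mlE α 0 (((T ^ α : ℝ) : ℂ) * lam) = 0 := by
  set c : ℝ := T ^ α
  set a : ℕ → ℂ := fun k => (Real.Gamma (α * k + 0) : ℂ)⁻¹ * (c : ℂ) ^ k
  have hterm : ∀ k : ℕ, ((Real.Gamma (α * k + 0))⁻¹ • (c • A) ^ k).map ofReal =
      a k • A.map ofReal ^ k := by
    intro k
    have hpow : A.map ofReal ^ k = (A ^ k).map ofReal := (Matrix.map_pow A ofRealHom k).symm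
    ext i j
    simp [a, hpow, smul_pow, mul_assoc]
  have hmap : Continuous fun B : Matrix n n ℝ => B.map ofReal :=
    continuous_id.matrix_map continuous_ofReal
  have hsum := Matrix.summable_inv_Gamma_smul_pow hα0 0 (c • A)
  have hM : Summable fun k => a k • A.map ofReal ^ k := by
    simp_rw [← hterm]; exact hsum.map ofRealHom.mapMatrix hmap
  have hseries : (mlMatR α 0 (c • A)).map ofReal = ∑' k, a k • A.map ofReal ^ k :=
    (hsum.map_tsum ofRealHom.mapMatrix hmap).trans (tsum_congr hterm)
  have ha : ∀ μ : ℂ, Summable fun k => a k * μ ^ k := fun μ => by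
    simpa [a, mul_pow, mul_assoc, Complex.real_smul] using
      summable_inv_Gamma_smul_pow hα0 0 ((c : ℂ) * μ)
  have hE : ∀ μ : ℂ, mlE α 0 (c * μ) = ∑' k, a k * μ ^ k := fun μ => by
    simp only [mlE, a, mul_pow, mul_assoc]
  calc (∃ x₀ : n → ℝ, x₀ ≠ 0 ∧ mlMatR α 0 (c • A) *ᵥ x₀ = 0)
      ↔ ∃ v ≠ 0, (mlMatR α 0 (c • A)).map ofReal *ᵥ v = 0 :=
        Matrix.exists_mulVec_eq_zero_iff_map (f := ofRealHom) ofReal_injective _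
    _ ↔ ∃ v ≠ 0, (∑' k, a k • A.map ofReal ^ k) *ᵥ v = 0 := by rw [hseries]
    _ ↔ ∃ μ ∈ spectrum ℂ (A.map ofReal), ∑' k, a k * μ ^ k = 0 :=
        Matrix.exists_tsum_smul_pow_mulVec_eq_zero_iff hM ha
    _ ↔ _ := by simp only [hE]

theorem multiple_point_iff {n : Type*} [Fintype n] [DecidableEq n] [Nonempty n]
    (α : ℝ) (hα0 : 0 < α) (hα1 : α < 1) (T : ℝ) (hT : 0 < T) (A : Matrix n n ℝ) :
    (∃ x₀ : n → ℝ, x₀ ≠ 0 ∧ (mlMatR α 0 ((T ^ α) • A)).mulVec x₀ = 0) ↔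
      ∃ lam ∈ spectrum ℂ (A.map Complex.ofReal),
        mlE α 0 (((T ^ α : ℝ) : ℂ) * lam) = 0 :=
  multiple_point_iff_general α hα0 T A
end
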